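/- Let n ≥ 2, λ ∈ ℤ^n with λ₁ ≥ λ₂ ≥ … ≥ λₙ ≥ 0, and (ν, μ) ∈ τ_{Bₙ}(λ). Then there exists exactly one pair (t, i) where t is a nondecreasing finite list with entries in {1, …, n} and i is a nonincreasing finite list with entries in {1, …, n−1}, such that νⱼ = λⱼ − (the number of entries of t equal to j) for every j with 1 ≤ j ≤ n, and μⱼ = νⱼ + (the number of entries of i equal to j−1) for every j with 2 ≤ j ≤ n. In other words, every element of τ_{Bₙ}(λ) is realized by a unique λ-admissible composite ξ_{−t^ℓ,+i^m} of the lattice lowering maps ξ_{−j} (subtract 1 from coordinate j) and raising maps ξ_{+j} (add 1 to coordinate j+1). -/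

import Mathlib

/-!
A list sorted for a total order is determined by its multiset, hence by its multiplicities, and
every finitely supported multiplicity function is realized by sorting the corresponding multiset.
The conditions on `(t, i)` prescribe the multiplicities `λⱼ - νⱼ` in `t` and `μⱼ₊₁ - νⱼ₊₁` in
`i`, and interleaving makes these nonnegative.
-/

namespace List

variable {α : Type*}

theorem existsUnique_pairwise_coe_eq (r : α → α → Prop) [DecidableRel r] [IsTrans α r]
    [Std.Antisymm r] [Std.Total r] (m : Multiset α) :
    ∃! l : List α, l.Pairwise r ∧ (l : Multiset α) = m := by
  refine ⟨m.sort r, ⟨m.pairwise_sort r, m.sort_eq r⟩, fun l ⟨hl, hlm⟩ => ?_⟩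
  rw [← m.sort_eq r, Multiset.coe_eq_coe] at hlm
  exact hlm.eq_of_pairwise' hl (m.pairwise_sort r)

variable [DecidableEq α]

theorem coe_eq_sum_replicate_iff (l : List α) (s : Finset α) (c : α → ℕ) :
    (l : Multiset α) = ∑ x ∈ s, Multiset.replicate (c x) x ↔
      (∀ x ∈ l, x ∈ s) ∧ ∀ x ∈ s, l.count x = c x := by
  simp only [Multiset.ext, Multiset.coe_count, Multiset.count_sum', Multiset.count_replicate,
    Finset.sum_ite_eq']
  refine ⟨fun h => ⟨fun x hx => ?_, fun x hx => by rw [h, if_pos hx]⟩, fun ⟨hs, hc⟩ x => ?_⟩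
  · by_contra hxs
    exact (count_pos_iff.2 hx).ne' (by rw [h, if_neg hxs])
  · split_ifs with hx
    · exact hc x hx
    · exact count_eq_zero_of_not_mem (mt (hs x) hx)

theorem existsUnique_pairwise_count (r : α → α → Prop) [DecidableRel r] [IsTrans α r]
    [Std.Antisymm r] [Std.Total r] (s : Finset α) (c : α → ℕ) :
    ∃! l : List α, l.Pairwise r ∧ (∀ x ∈ l, x ∈ s) ∧ ∀ x ∈ s, l.count x = c x := by
  simpa only [coe_eq_sum_replicate_iff] using
    existsUnique_pairwise_coe_eq r (∑ x ∈ s, Multiset.replicate (c x) x)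

end List

theorem ExistsUnique.prod {α β : Type*} {p : α → Prop} {q : β → Prop}
    (hp : ∃! a, p a) (hq : ∃! b, q b) : ∃! x : α × β, p x.1 ∧ q x.2 := by
  obtain ⟨a, ha, ha_uniq⟩ := hp
  obtain ⟨b, hb, hb_uniq⟩ := hq
  exact ⟨(a, b), ⟨ha, hb⟩, fun x ⟨hx₁, hx₂⟩ => Prod.ext (ha_uniq _ hx₁) (hb_uniq _ hx₂)⟩

theorem stmt_9_general (n : ℕ) (l ν μ : ℕ → ℤ)
    (h1 : ∀ j, 1 ≤ j → j ≤ n → ν j ≤ l j)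
    (h5 : ∀ j, 2 ≤ j → j ≤ n → ν j ≤ μ j) :
    ∃! p : List ℕ × List ℕ,
      List.Pairwise (· ≤ ·) p.1 ∧ (∀ x ∈ p.1, 1 ≤ x ∧ x ≤ n) ∧
      List.Pairwise (· ≥ ·) p.2 ∧ (∀ x ∈ p.2, 1 ≤ x ∧ x ≤ n - 1) ∧
      (∀ j, 1 ≤ j → j ≤ n → ν j = l j - (p.1.count j : ℤ)) ∧
      (∀ j, 2 ≤ j → j ≤ n → μ j = ν j + (p.2.count (j - 1) : ℤ)) := by
  have hν (t : List ℕ) : (∀ j, 1 ≤ j → j ≤ n → ν j = l j - (t.count j : ℤ)) ↔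
      ∀ j ∈ Finset.Icc 1 n, t.count j = (l j - ν j).toNat := by
    refine forall_congr' fun j => ?_
    simp only [Finset.mem_Icc, and_imp]
    refine forall₂_congr fun hj₁ hj₂ => ?_
    have := h1 j hj₁ hj₂
    omega
  have hμ (i : List ℕ) : (∀ j, 2 ≤ j → j ≤ n → μ j = ν j + (i.count (j - 1) : ℤ)) ↔
      ∀ j ∈ Finset.Icc 1 (n - 1), i.count j = (μ (j + 1) - ν (j + 1)).toNat := by
    simp only [Finset.mem_Icc, and_imp]
    constructor
    · intro h k hk₁ hk₂
      have := h (k + 1) (by omega) (by omega)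
      rw [Nat.add_sub_cancel] at this
      omega
    · rintro h (_ | k) hk₁ hk₂
      · omega
      · have := h k (by omega) (by omega)
        have := h5 (k + 1) hk₁ hk₂
        rw [Nat.add_sub_cancel]
        omega
  refine (existsUnique_congr fun p => ?_).2 <| ExistsUnique.prod
    (List.existsUnique_pairwise_count (· ≤ ·) (Finset.Icc 1 n) fun j => (l j - ν j).toNat)
    (List.existsUnique_pairwise_count (· ≥ ·) (Finset.Icc 1 (n - 1))
      fun j => (μ (j + 1) - ν (j + 1)).toNat)
  simp only [hν, hμ, Finset.mem_Icc]
  tauto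

/-- Unambiguity of the notation ξ_{(μ,ν)} in type Bₙ: every (ν, μ) ∈ τ_{Bₙ}(λ)
is realized by a unique pair (t, i) of a nondecreasing list t with entries in
{1, …, n} and a nonincreasing list i with entries in {1, …, n−1} such that
νⱼ = λⱼ − #{entries of t equal to j} (1 ≤ j ≤ n) and
μⱼ = νⱼ + #{entries of i equal to j−1} (2 ≤ j ≤ n). -/
theorem stmt_9 (n : ℕ) (hn : 2 ≤ n) (l ν μ : ℕ → ℤ)
    (hdom : ∀ j, 1 ≤ j → j ≤ n - 1 → l (j + 1) ≤ l j) (hpos : 0 ≤ l n)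
    (h1 : ∀ j, 1 ≤ j → j ≤ n → ν j ≤ l j)
    (h2 : ∀ j, 1 ≤ j → j ≤ n - 1 → l (j + 1) ≤ ν j)
    (h3 : - l n ≤ ν n)
    (h4 : ∀ j, 2 ≤ j → j ≤ n → μ j ≤ ν (j - 1))
    (h5 : ∀ j, 2 ≤ j → j ≤ n → ν j ≤ μ j)
    (h6 : - μ n ≤ ν n) :
    ∃! p : List ℕ × List ℕ,
      List.Pairwise (· ≤ ·) p.1 ∧ (∀ x ∈ p.1, 1 ≤ x ∧ x ≤ n) ∧
      List.Pairwise (· ≥ ·) p.2 ∧ (∀ x ∈ p.2, 1 ≤ x ∧ x ≤ n - 1) ∧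
      (∀ j, 1 ≤ j → j ≤ n → ν j = l j - (p.1.count j : ℤ)) ∧
      (∀ j, 2 ≤ j → j ≤ n → μ j = ν j + (p.2.count (j - 1) : ℤ)) :=
  stmt_9_general n l ν μ h1 h5
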